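/- arXiv:2309.17397 — 3 statements merged into one kernel-verified Lean document; each statement's English description precedes it below -/
import Mathlib

section
/- For all integers n ≥ 1, ∑_{i=1}^{n} C(n,i) · [1/2]_i · [1/2]_{n+1-i} = [1/2]_{n+1}, where C(n,i) is the binomial coefficient and [1/2]_k = |(1/2)_k| is the absolute value of the falling factorial of 1/2. -/
open Polynomial Finset

/-- `ffHalf n = |(1/2)_n|`, the absolute value of the falling factorial of `1/2`. -/
noncomputable def ffHalf (n : ℕ) : ℝ := |(descPochhammer ℝ n).eval (1/2 : ℝ)|

noncomputable def aa (n : ℕ) : ℝ := (descPochhammer ℝ n).eval (1/2 : ℝ)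

lemma aa_succ (n : ℕ) : aa (n + 1) = aa n * (1/2 - n) := by
  unfold aa
  rw [descPochhammer_succ_right, eval_mul, eval_sub, eval_X, eval_natCast]

lemma aa_pos (n : ℕ) : 0 < (-1 : ℝ)^n * aa (n + 1) := by
  induction n with
  | zero => simp [aa_succ, aa]
  | succ m ih =>
      have h : (-1 : ℝ)^(m+1) * aa (m + 2) = ((-1:ℝ)^m * aa (m+1)) * ((m:ℝ) + 1 - 1/2) := by
        rw [aa_succ (m+1)]; push_cast; ring
      rw [h]
      have h2 : (0:ℝ) < (m:ℝ) + 1 - 1/2 := by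
        have : (0:ℝ) ≤ (m:ℝ) := Nat.cast_nonneg m
        linarith
      exact mul_pos ih h2

lemma ffHalf_succ (n : ℕ) : ffHalf (n + 1) = (-1:ℝ)^n * aa (n + 1) := by
  show |aa (n+1)| = _
  rw [← abs_of_pos (aa_pos n), abs_mul, abs_pow, abs_neg, abs_one, one_pow, one_mul]

-- smeval vs eval
lemma smeval_eq (k : ℕ) (x : ℝ) :
    (descPochhammer ℤ k).smeval x = (descPochhammer ℝ k).eval x := by
  rw [← Polynomial.aeval_eq_smeval, aeval_def, ← eval_map, descPochhammer_map]

-- b j := eval at -1/2 equals 2 * aa (j+1)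
lemma bb_eq (j : ℕ) : (descPochhammer ℝ j).eval (-(1/2) : ℝ) = 2 * aa (j + 1) := by
  have h : aa (j + 1) = (1/2 : ℝ) * (descPochhammer ℝ j).eval (-(1/2) : ℝ) := by
    unfold aa
    rw [descPochhammer_succ_left, eval_mul, eval_X, eval_comp, eval_sub, eval_X, eval_one]
    norm_num
  rw [h]; ring

lemma key_sum (n : ℕ) (hn : 1 ≤ n) :
    ∑ i ∈ Finset.Icc 1 n, (n.choose i : ℝ) * aa i * aa (n + 1 - i) = -aa (n + 1) := by
  have hv := Ring.descPochhammer_smeval_add (R := ℝ) (r := (1/2 : ℝ)) (s := (-(1/2) : ℝ)) n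
    (Commute.all _ _)
  rw [show (1/2 : ℝ) + (-(1/2)) = 0 by ring] at hv
  rw [smeval_eq] at hv
  rw [descPochhammer_ne_zero_eval_zero (R := ℝ) (show n ≠ 0 by omega)] at hv
  simp only [smeval_eq, bb_eq] at hv
  rw [Finset.Nat.sum_antidiagonal_eq_sum_range_succ_mk] at hv
  rw [Finset.sum_range_succ'] at hv
  -- hv : 0 = ∑ i in range n, C(n,i+1) * (aa (i+1) * (2 * aa (n-(i+1)+1))) + 1 * (aa 0 * (2 * aa (n-0+1)))
  have ha0 : aa 0 = 1 := by simp [aa]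
  have aadef : ∀ k : ℕ, (descPochhammer ℝ k).eval (1/2 : ℝ) = aa k := fun _ => rfl
  simp only [aadef, Nat.sub_zero, Nat.choose_zero_right, Nat.cast_one, ha0] at hv
  have hIcc : ∑ i ∈ Finset.Icc 1 n, (n.choose i : ℝ) * aa i * aa (n + 1 - i)
      = ∑ i ∈ Finset.range n, (n.choose (i+1) : ℝ) * aa (i+1) * aa (n - (i+1) + 1) := by
    rw [← Finset.Ico_add_one_right_eq_Icc, Finset.sum_Ico_eq_sum_range]
    apply Finset.sum_congr (by norm_num)
    intro i hi
    simp only [Finset.mem_range] at hi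
    rw [add_comm 1 i]
    congr 2
    omega
  rw [hIcc]
  have hc := Finset.sum_congr rfl (fun i (_ : i ∈ Finset.range n) =>
    show (n.choose (i+1) : ℝ) * (aa (i+1) * (2 * aa (n - (i+1) + 1)))
       = 2 * ((n.choose (i+1) : ℝ) * aa (i+1) * aa (n - (i+1) + 1)) by ring)
  have hmul : ∑ i ∈ Finset.range n, 2 * ((n.choose (i+1) : ℝ) * aa (i+1) * aa (n - (i+1) + 1))
      = 2 * ∑ i ∈ Finset.range n, (n.choose (i+1) : ℝ) * aa (i+1) * aa (n - (i+1) + 1) :=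
    (Finset.mul_sum _ _ _).symm
  linarith [hv, hc, hmul]

theorem ffHalf_convolution_id (n : ℕ) (hn : 1 ≤ n) :
    ∑ i ∈ Finset.Icc 1 n, (n.choose i : ℝ) * ffHalf i * ffHalf (n + 1 - i)
      = ffHalf (n + 1) := by
  have hterm : ∀ i ∈ Finset.Icc 1 n,
      (n.choose i : ℝ) * ffHalf i * ffHalf (n + 1 - i)
        = (-1 : ℝ)^(n-1) * ((n.choose i : ℝ) * aa i * aa (n + 1 - i)) := by
    intro i hi
    simp only [Finset.mem_Icc] at hi
    obtain ⟨h1, h2⟩ := hi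
    obtain ⟨j, rfl⟩ : ∃ j, i = j + 1 := ⟨i - 1, by omega⟩
    have hm : n + 1 - (j + 1) = (n - j - 1) + 1 := by omega
    rw [hm, ffHalf_succ, ffHalf_succ]
    have hjm : j + (n - j - 1) = n - 1 := by omega
    rw [show ((-1:ℝ)^j * aa (j+1)) = (-1:ℝ)^j * aa (j+1) from rfl]
    calc (n.choose (j+1) : ℝ) * ((-1:ℝ)^j * aa (j+1)) * ((-1:ℝ)^(n-j-1) * aa (n-j-1+1))
        = ((-1:ℝ)^(j + (n-j-1))) * ((n.choose (j+1) : ℝ) * aa (j+1) * aa (n-j-1+1)) := by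
          rw [pow_add]; ring
      _ = (-1 : ℝ)^(n-1) * ((n.choose (j+1) : ℝ) * aa (j+1) * aa (n-j-1+1)) := by rw [hjm]
  rw [Finset.sum_congr rfl hterm, ← Finset.mul_sum, key_sum n hn]
  obtain ⟨m, rfl⟩ : ∃ m, n = m + 1 := ⟨n - 1, by omega⟩
  rw [ffHalf_succ]
  simp only [Nat.add_sub_cancel]
  rw [pow_succ]
  ring
end

section
/- For all integers k ≥ 2, ∑_{i=1}^{k-1} C(k,i) · [1/2]_i · [1/2]_{k-i} = 2 · [1/2]_k, where [1/2]_n = |(1/2)_n| is the absolute value of the falling factorial of 1/2. -/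
/-!
Chu–Vandermonde for falling factorials at `r = s = 1/2` gives
`∑_{i=0}^k C(k,i) (1/2)_i (1/2)_{k-i} = (1)_k = 0` for `k ≥ 2`. For `n ≥ 1` the factors of
`(1/2)_n` after the first are negative, so `(1/2)_n = -(-1)^n [1/2]_n`: every interior term then
carries the sign `(-1)^k`, and the two boundary terms are both `(1/2)_k = -(-1)^k [1/2]_k`.
-/

open Finset Polynomial

theorem Finset.sum_range_succ_eq_add_sum_Icc_add {M : Type*} [AddCommMonoid M] (f : ℕ → M)
    {k : ℕ} (hk : 1 ≤ k) : ∑ i ∈ range (k + 1), f i = f 0 + ∑ i ∈ Icc 1 (k - 1), f i + f k := by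
  obtain ⟨n, rfl⟩ := Nat.exists_eq_add_of_le' hk
  rw [sum_range_succ, sum_range_succ', add_comm _ (f 0), Nat.add_sub_cancel,
    ← Ico_add_one_right_eq_Icc, sum_Ico_eq_sum_range, Nat.add_sub_cancel]
  simp only [add_comm 1]

namespace Polynomial

variable {R : Type*} [CommRing R]

theorem descPochhammer_eval_add (r s : R) (k : ℕ) :
    (descPochhammer R k).eval (r + s) = ∑ ij ∈ antidiagonal k,
      k.choose ij.1 * ((descPochhammer R ij.1).eval r * (descPochhammer R ij.2).eval s) := by
  have smeval_eq_eval (n : ℕ) (x : R) :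
      (descPochhammer ℤ n).smeval x = (descPochhammer R n).eval x := by
    rw [← aeval_eq_smeval, aeval_def, eval₂_eq_eval_map, descPochhammer_map]
  simpa only [smeval_eq_eval] using Ring.descPochhammer_smeval_add k (Commute.all r s)

theorem sum_Icc_choose_mul_descPochhammer_eval (r s : R) {k : ℕ} (hk : 1 ≤ k) :
    ∑ i ∈ Icc 1 (k - 1),
      k.choose i * ((descPochhammer R i).eval r * (descPochhammer R (k - i)).eval s) =
      (descPochhammer R k).eval (r + s) - (descPochhammer R k).eval r -
        (descPochhammer R k).eval s := by
  rw [descPochhammer_eval_add, Nat.sum_antidiagonal_eq_sum_range_succ_mk,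
    sum_range_succ_eq_add_sum_Icc_add _ hk]
  simp only [Nat.choose_zero_right, Nat.choose_self, Nat.cast_one, descPochhammer_zero, eval_one,
    tsub_zero, tsub_self, one_mul, mul_one]
  ring

end Polynomial

theorem descPochhammer_eval_half {n : ℕ} (hn : 1 ≤ n) :
    (descPochhammer ℝ n).eval (1 / 2) = -(-1) ^ n * ffHalf n := by
  induction n, hn using Nat.le_induction with
  | base => norm_num [ffHalf]
  | succ n hn ih =>
    have hfactor : (1 / 2 - n : ℝ) < 0 := by
      have : (1 : ℝ) ≤ n := by exact_mod_cast hn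
      linarith
    rw [ffHalf, descPochhammer_succ_eval, abs_mul, ← ffHalf, ih, abs_of_neg hfactor]
    ring

theorem ffHalf_convolution_id2 (k : ℕ) (hk : 2 ≤ k) :
    ∑ i ∈ Finset.Icc 1 (k - 1), (k.choose i : ℝ) * ffHalf i * ffHalf (k - i)
      = 2 * ffHalf k := by
  have hvanish : (descPochhammer ℝ k).eval (1 / 2 + 1 / 2 : ℝ) = 0 := by
    rw [add_halves, ← Nat.cast_one, descPochhammer_eval_eq_descFactorial,
      Nat.descFactorial_eq_zero_iff_lt.mpr hk, Nat.cast_zero]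
  have hterm : ∀ i ∈ Icc 1 (k - 1),
      (k.choose i : ℝ) * ((descPochhammer ℝ i).eval (1 / 2) *
        (descPochhammer ℝ (k - i)).eval (1 / 2)) =
      (-1) ^ k * ((k.choose i : ℝ) * ffHalf i * ffHalf (k - i)) := by
    intro i hi
    obtain ⟨hi1, hik⟩ := mem_Icc.mp hi
    rw [descPochhammer_eval_half hi1, descPochhammer_eval_half (by omega),
      ← Nat.add_sub_of_le (by omega : i ≤ k), pow_add, Nat.add_sub_cancel_left]
    ring
  have hsum := sum_Icc_choose_mul_descPochhammer_eval (1 / 2 : ℝ) (1 / 2) (by omega : 1 ≤ k)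
  rw [hvanish, sum_congr rfl hterm, ← mul_sum, descPochhammer_eval_half (by omega)] at hsum
  exact mul_left_cancel₀ (pow_ne_zero k (by norm_num : (-1 : ℝ) ≠ 0)) (by linarith)
end

section
/- For all integers k ≥ 2, ∑_{i=1}^{k} C(k,i) · [1/2]_i · [1/2]_{k-i} = 3 · [1/2]_k, where [1/2]_n = |(1/2)_n| is the absolute value of the falling factorial of 1/2. -/
open Polynomial Finset

private lemma smeval_desc (n : ℕ) (r : ℝ) :
    (descPochhammer ℤ n).smeval r = (descPochhammer ℝ n).eval r := by
  rw [← Polynomial.aeval_eq_smeval, ← descPochhammer_map (algebraMap ℤ ℝ), aeval_def,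
    eval_map]

private lemma desc_half_pos (n : ℕ) :
    0 < (-1 : ℝ) ^ n * (descPochhammer ℝ (n + 1)).eval (1/2 : ℝ) := by
  induction n with
  | zero => simp [descPochhammer_succ_eval]
  | succ n ih =>
    have h : (descPochhammer ℝ (n + 1 + 1)).eval (1/2 : ℝ)
        = (descPochhammer ℝ (n + 1)).eval (1/2 : ℝ) * ((1/2 : ℝ) - (n + 1)) := by
      rw [descPochhammer_succ_eval]; push_cast; ring_nf
    have hneg : ((1/2 : ℝ) - (n + 1)) < 0 := by
      have : (0 : ℝ) ≤ n := Nat.cast_nonneg n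
      linarith
    have := mul_pos_of_neg_of_neg (a := (-1 : ℝ)) (by norm_num)
      (mul_neg_of_pos_of_neg ih hneg)
    calc (0 : ℝ) < -1 * ((-1 : ℝ) ^ n * (descPochhammer ℝ (n + 1)).eval (1/2 : ℝ)
          * ((1/2 : ℝ) - (n + 1))) := this
      _ = (-1 : ℝ) ^ (n + 1) * (descPochhammer ℝ (n + 1 + 1)).eval (1/2 : ℝ) := by
          rw [h]; ring

private lemma ffHalf_eq (n : ℕ) (hn : 1 ≤ n) :
    ffHalf n = (-1 : ℝ) ^ (n - 1) * (descPochhammer ℝ n).eval (1/2 : ℝ) := by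
  obtain ⟨m, rfl⟩ : ∃ m, n = m + 1 := ⟨n - 1, by omega⟩
  have h := desc_half_pos m
  have habs : |(-1 : ℝ) ^ m * (descPochhammer ℝ (m + 1)).eval (1/2 : ℝ)|
      = |(descPochhammer ℝ (m + 1)).eval (1/2 : ℝ)| := by
    rw [abs_mul, abs_pow, abs_neg, abs_one, one_pow, one_mul]
  rw [ffHalf, ← habs, abs_of_pos h, Nat.add_sub_cancel]

private lemma desc_eval_one_zero (k : ℕ) (hk : 2 ≤ k) :
    (descPochhammer ℝ k).eval (1 : ℝ) = 0 := by
  obtain ⟨m, rfl⟩ : ∃ m, k = m + 2 := ⟨k - 2, by omega⟩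
  induction m with
  | zero => simp [descPochhammer_succ_eval]
  | succ m ih =>
    rw [show m + 1 + 2 = (m + 2) + 1 from by ring, descPochhammer_succ_eval,
      ih (by omega), zero_mul]

theorem ffHalf_convolution_id3 (k : ℕ) (hk : 2 ≤ k) :
    ∑ i ∈ Finset.Icc 1 k, (k.choose i : ℝ) * ffHalf i * ffHalf (k - i)
      = 3 * ffHalf k := by
  set p : ℕ → ℝ := fun n => (descPochhammer ℝ n).eval (1/2 : ℝ) with hp
  have hp0 : p 0 = 1 := by simp [hp]
  have hff0 : ffHalf 0 = 1 := by simp [ffHalf]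
  have hpval : ∀ i, 1 ≤ i → p i = (-1 : ℝ) ^ (i - 1) * ffHalf i := by
    intro i hi
    rw [ffHalf_eq i hi, ← mul_assoc, ← pow_add]
    rw [show (-1:ℝ)^((i-1)+(i-1)) = 1 from Even.neg_one_pow ⟨i - 1, rfl⟩, one_mul]
  -- Chu–Vandermonde at 1/2 + 1/2
  have hvand := Ring.descPochhammer_smeval_add (R := ℝ) (r := (1/2 : ℝ)) (s := (1/2 : ℝ)) k
    (Commute.all _ _)
  simp only [smeval_desc] at hvand
  rw [show (1/2 : ℝ) + 1/2 = 1 from by norm_num, desc_eval_one_zero k hk,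
    Finset.Nat.sum_antidiagonal_eq_sum_range_succ_mk] at hvand
  have h0 : (0 : ℝ) = ∑ i ∈ Finset.range (k + 1), (k.choose i : ℝ) * (p i * p (k - i)) :=
    hvand
  have hrange : Finset.range (k + 1) = insert 0 (Finset.Icc 1 k) := by
    ext x; simp [Finset.mem_Icc, Nat.lt_succ_iff]; omega
  have hIcc : Finset.Icc 1 k = insert k (Finset.Icc 1 (k - 1)) := by
    ext x; simp [Finset.mem_Icc]; omega
  have h0notin : (0 : ℕ) ∉ Finset.Icc 1 k := by simp
  have hknotin : k ∉ Finset.Icc 1 (k - 1) := by simp; omega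
  rw [hrange, Finset.sum_insert h0notin, hIcc, Finset.sum_insert hknotin] at h0
  -- rewrite the middle sum
  have hmid : ∑ i ∈ Finset.Icc 1 (k - 1), (k.choose i : ℝ) * (p i * p (k - i))
      = (-1 : ℝ) ^ k * ∑ i ∈ Finset.Icc 1 (k - 1),
          (k.choose i : ℝ) * ffHalf i * ffHalf (k - i) := by
    rw [Finset.mul_sum]
    refine Finset.sum_congr rfl fun i hi => ?_
    simp only [Finset.mem_Icc] at hi
    rw [hpval i hi.1, hpval (k - i) (by omega)]
    have hexp : (i - 1) + (k - i - 1) = k - 2 := by omega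
    have hsign : (-1 : ℝ) ^ (i - 1) * (-1 : ℝ) ^ (k - i - 1) = (-1 : ℝ) ^ k := by
      rw [← pow_add, hexp, show k = (k - 2) + 2 from by omega, pow_add]
      norm_num
    calc (k.choose i : ℝ) * ((-1:ℝ)^(i-1) * ffHalf i * ((-1:ℝ)^(k-i-1) * ffHalf (k-i)))
        = ((-1:ℝ)^(i-1) * (-1:ℝ)^(k-i-1)) * ((k.choose i : ℝ) * ffHalf i * ffHalf (k-i)) := by
          ring
      _ = (-1 : ℝ) ^ k * ((k.choose i : ℝ) * ffHalf i * ffHalf (k - i)) := by rw [hsign]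
  rw [hmid] at h0
  set T : ℝ := ∑ i ∈ Finset.Icc 1 (k - 1), (k.choose i : ℝ) * ffHalf i * ffHalf (k - i)
    with hT
  have hpk : p k = (-1 : ℝ) ^ (k - 1) * ffHalf k := hpval k (by omega)
  have hk1 : (-1 : ℝ) ^ (k - 1) = -(-1 : ℝ) ^ k := by
    have h : (-1 : ℝ) ^ ((k - 1) + 1) = (-1 : ℝ) ^ (k - 1) * (-1) := pow_succ _ _
    rw [show (k - 1) + 1 = k from by omega] at h
    rw [h]; ring
  have hsq : (-1 : ℝ) ^ k * (-1 : ℝ) ^ k = 1 := by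
    rw [← pow_add]; exact Even.neg_one_pow ⟨k, rfl⟩
  -- simplify h0
  have hsub : Nat.sub k 0 = k := Nat.sub_zero k
  rw [Nat.choose_zero_right, Nat.choose_self, Nat.sub_zero, Nat.sub_self, hp0, hpk, hk1] at h0
  push_cast at h0
  have hTval : T = 2 * ffHalf k := by
    linear_combination (-(-1 : ℝ) ^ k) * h0 + (2 * ffHalf k - T) * hsq
  rw [hIcc, Finset.sum_insert hknotin, ← hT, hTval, Nat.sub_self, hff0, Nat.choose_self]
  push_cast
  ring
end
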